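/- Let X_1, …, X_n be i.i.d. real random variables with law μ, CDF F(x) = μ((−∞, x]), and left limit F(x⁻) := μ((−∞, x)), with order statistics X_(1) ≤ … ≤ X_(n). Let U_(1) ≤ … ≤ U_(n) be the order statistics of n i.i.d. random variables uniformly distributed on [0,1]. Then for any constants 0 ≤ L_1 ≤ L_2 ≤ … ≤ L_n ≤ 1, ℙ(∀ i ∈ {1,…,n} : F(X_(i)⁻) ≤ 1 − L_{n−i+1}) ≥ ℙ(∀ i ∈ {1,…,n} : U_(i) ≥ L_i). -/

import Mathlib

open MeasureTheory ProbabilityTheory Set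

noncomputable def orderStat {n : ℕ} (x : Fin n → ℝ) : Fin n → ℝ := x ∘ Tuple.sort x

/-!
Let `Q` be the quantile function of `μ` and `T v = Q (1 - v)`. If `V` is uniform on `[0, 1]`
then `T V` has law `μ`, so `(T (U j))_j` is a copy of `(X j)_j`. Since `T` is antitone, the `i`-th
order statistic of `T ∘ U` is `T (U_(n+1-i))`, and `F (T v⁻) ≤ 1 - v`. Hence, on the event
`∀ i, L i ≤ U_(i)`, we get `F (T(U)_(i)⁻) ≤ 1 - U_(n+1-i) ≤ 1 - L (n+1-i)`.
-/

open Function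

namespace ProbabilityTheory

/-- The quantile function of `μ`, i.e. the generalized inverse of its cdf; its values outside
`(0, 1)` are junk. -/
noncomputable def quantile (μ : Measure ℝ) (u : ℝ) : ℝ := sInf {x | u ≤ cdf μ x}

variable {μ : Measure ℝ} {u x : ℝ}

lemma bddBelow_setOf_le_cdf (hu : 0 < u) : BddBelow {x | u ≤ cdf μ x} := by
  obtain ⟨b, hb⟩ := ((tendsto_cdf_atBot μ).eventually (gt_mem_nhds hu)).exists_forall_of_atBot
  exact ⟨b, fun x hx => le_of_not_gt fun hxb => (hb x hxb.le).not_ge hx⟩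

lemma nonempty_setOf_le_cdf (hu : u < 1) : {x | u ≤ cdf μ x}.Nonempty :=
  ((tendsto_cdf_atTop μ).eventually (eventually_ge_nhds hu)).exists

lemma quantile_le_iff (hu : u ∈ Ioo 0 1) : quantile μ u ≤ x ↔ u ≤ cdf μ x := by
  refine ⟨fun h => ?_, fun h => csInf_le (bddBelow_setOf_le_cdf hu.1) h⟩
  have hq : u ≤ cdf μ (quantile μ u) := by
    refine ge_of_tendsto (((cdf μ).right_continuous _).mono Ioi_subset_Ici_self) ?_
    filter_upwards [self_mem_nhdsWithin] with y hy
    obtain ⟨z, hz, hzy⟩ := exists_lt_of_csInf_lt (nonempty_setOf_le_cdf hu.2) hy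
    exact hz.trans (monotone_cdf μ hzy.le)
  exact hq.trans (monotone_cdf μ h)

lemma monotoneOn_quantile : MonotoneOn (quantile μ) (Ioo 0 1) := fun _ hu _ hv huv =>
  (quantile_le_iff hu).2 (huv.trans ((quantile_le_iff hv).1 le_rfl))

lemma measureReal_Iio_quantile_le [IsProbabilityMeasure μ] (hu : u ∈ Ioo 0 1) :
    μ.real (Iio (quantile μ u)) ≤ u := by
  have hleft : leftLim (cdf μ) (quantile μ u) ≤ u := by
    refine le_of_tendsto ((monotone_cdf μ).tendsto_leftLim _) ?_
    filter_upwards [self_mem_nhdsWithin] with x hx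
    exact le_of_lt (not_le.1 fun h => not_le.2 hx ((quantile_le_iff hu).2 h))
  calc μ.real (Iio (quantile μ u))
      = (cdf μ).measure.real (Iio (quantile μ u)) := by rw [measure_cdf]
    _ ≤ u := by
      rw [measureReal_def, (cdf μ).measure_Iio (tendsto_cdf_atBot μ), sub_zero,
        ENNReal.toReal_ofReal']
      exact max_le hleft hu.1.le

lemma ae_mem_Ioo_uniform : ∀ᵐ v ∂(volume.restrict (Icc (0 : ℝ) 1)), v ∈ Ioo 0 1 := by
  rw [← Measure.restrict_congr_set Ioo_ae_eq_Icc]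
  exact ae_restrict_mem measurableSet_Ioo

lemma antitoneOn_quantile_one_sub : AntitoneOn (fun v => quantile μ (1 - v)) (Ioo 0 1) :=
  fun _ hv _ hw hvw =>
    monotoneOn_quantile (Ioo.one_sub_mem hw) (Ioo.one_sub_mem hv) (sub_le_sub_left hvw 1)

lemma aemeasurable_quantile_one_sub :
    AEMeasurable (fun v => quantile μ (1 - v)) (volume.restrict (Icc 0 1)) := by
  rw [← Measure.restrict_congr_set Ioo_ae_eq_Icc]
  exact aemeasurable_restrict_of_antitoneOn measurableSet_Ioo antitoneOn_quantile_one_sub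

lemma map_quantile_one_sub_uniform [IsProbabilityMeasure μ] :
    (volume.restrict (Icc (0 : ℝ) 1)).map (fun v => quantile μ (1 - v)) = μ := by
  refine Measure.ext_of_Iic _ _ fun x => ?_
  have hpre : (fun v => quantile μ (1 - v)) ⁻¹' Iic x
      =ᵐ[volume.restrict (Icc 0 1)] Ici (1 - cdf μ x) := by
    filter_upwards [ae_mem_Ioo_uniform] with v hv
    change (quantile μ (1 - v) ≤ x) = (1 - cdf μ x ≤ v)
    rw [quantile_le_iff (Ioo.one_sub_mem hv), sub_le_comm]
  rw [Measure.map_apply_of_aemeasurable aemeasurable_quantile_one_sub measurableSet_Iic,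
    measure_congr hpre, Measure.restrict_apply measurableSet_Ici, ← Ici_inter_Iic,
    ← inter_assoc, Ici_inter_Ici, Ici_inter_Iic, max_eq_left (sub_nonneg.2 (cdf_le_one μ x)),
    Real.volume_Icc, sub_sub_cancel, ofReal_cdf]


lemma iIndepFun.identDistrib_pi {ι : Type*} [Fintype ι] {β : ι → Type*}
    [∀ i, MeasurableSpace (β i)] {Ω Ω' : Type*} [MeasurableSpace Ω] [MeasurableSpace Ω']
    {P : Measure Ω} {P' : Measure Ω'} {X : ∀ i, Ω → β i} {Y : ∀ i, Ω' → β i}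
    (hXi : iIndepFun X P) (hYi : iIndepFun Y P') (hX : ∀ i, AEMeasurable (X i) P)
    (hY : ∀ i, AEMeasurable (Y i) P') (hlaw : ∀ i, P.map (X i) = P'.map (Y i)) :
    IdentDistrib (fun ω i => X i ω) (fun ω i => Y i ω) P P' where
  aemeasurable_fst := aemeasurable_pi_lambda _ hX
  aemeasurable_snd := aemeasurable_pi_lambda _ hY
  map_eq := by rw [hXi.map_fun_eq_pi_map hX, hYi.map_fun_eq_pi_map hY, funext hlaw]

lemma identDistrib_quantile_one_sub {ι Ω Ω' : Type*} [Fintype ι] [MeasurableSpace Ω]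
    [MeasurableSpace Ω'] {P : Measure Ω} {P' : Measure Ω'} [IsProbabilityMeasure μ]
    {X : ι → Ω → ℝ} {U : ι → Ω' → ℝ} (hXi : iIndepFun X P) (hX : ∀ i, AEMeasurable (X i) P)
    (hXlaw : ∀ i, P.map (X i) = μ) (hUi : iIndepFun U P') (hU : ∀ i, AEMeasurable (U i) P')
    (hUlaw : ∀ i, P'.map (U i) = volume.restrict (Icc 0 1)) :
    IdentDistrib (fun ω i => X i ω) (fun ω i => quantile μ (1 - U i ω)) P P' := by
  have hT : ∀ i, AEMeasurable (fun v => quantile μ (1 - v)) (P'.map (U i)) := fun i =>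
    hUlaw i ▸ aemeasurable_quantile_one_sub
  refine hXi.identDistrib_pi (hUi.comp₀ _ hU hT) hX (fun i => (hT i).comp_aemeasurable (hU i))
    fun i => ?_
  have hmap := (hT i).map_map_of_aemeasurable (hU i)
  rw [hUlaw i, map_quantile_one_sub_uniform] at hmap
  exact (hXlaw i).trans hmap

end ProbabilityTheory

section OrderStatistics

variable {n : ℕ}

open Finset in
lemma orderStat_le_iff (x : Fin n → ℝ) (i : Fin n) (a : ℝ) :
    orderStat x i ≤ a ↔ i < #{j | x j ≤ a} := by
  rw [orderStat, ← Tuple.lt_card_le_iff_apply_le_of_monotone (Tuple.monotone_sort x)]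
  exact iff_of_eq (congrArg _ (Finset.card_equiv (Tuple.sort x) (by simp)))

lemma measurable_orderStat (i : Fin n) : Measurable fun x : Fin n → ℝ => orderStat x i := by
  refine measurable_of_Iic fun a => ?_
  simp only [preimage, mem_Iic, orderStat_le_iff, Finset.card_filter]
  refine measurableSet_lt measurable_const (Finset.measurable_sum _ fun j _ => ?_)
  exact Measurable.ite (measurableSet_le (measurable_pi_apply j) measurable_const)
    measurable_const measurable_const

lemma orderStat_comp_of_antitoneOn {g : ℝ → ℝ} {s : Set ℝ} (hg : AntitoneOn g s)
    {x : Fin n → ℝ} (hx : ∀ j, x j ∈ s) (i : Fin n) :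
    orderStat (g ∘ x) i = g (orderStat x i.rev) := by
  have hmono : Monotone ((g ∘ x) ∘ Fin.revPerm.trans (Tuple.sort x)) := fun k l hkl =>
    hg (hx _) (hx _) (Tuple.monotone_sort x (Fin.rev_le_rev.2 hkl))
  have := congrFun (Tuple.comp_sort_eq_comp_iff_monotone.2 hmono) i
  simpa [orderStat] using this.symm

end OrderStatistics

lemma measureReal_Iio_orderStat_quantile_one_sub_le {n : ℕ} (μ : Measure ℝ)
    [IsProbabilityMeasure μ] {u : Fin n → ℝ} (hu : ∀ j, u j ∈ Ioo 0 1) (i : Fin n) :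
    μ.real (Iio (orderStat (fun j => quantile μ (1 - u j)) i)) ≤ 1 - orderStat u i.rev := by
  rw [show (fun j => quantile μ (1 - u j)) = (fun v => quantile μ (1 - v)) ∘ u from rfl,
    orderStat_comp_of_antitoneOn antitoneOn_quantile_one_sub hu]
  exact measureReal_Iio_quantile_le (Ioo.one_sub_mem (hu _))

theorem stmt_3_general
    {Ω : Type*} [MeasurableSpace Ω] (P : Measure Ω)
    {Ω' : Type*} [MeasurableSpace Ω'] (P' : Measure Ω')
    (n : ℕ) (X : Fin n → Ω → ℝ) (U : Fin n → Ω' → ℝ)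
    (μ : Measure ℝ) [IsProbabilityMeasure μ]
    (hXmeas : ∀ i, Measurable (X i))
    (hXindep : iIndepFun X P)
    (hXlaw : ∀ i, Measure.map (X i) P = μ)
    (hUmeas : ∀ i, Measurable (U i))
    (hUindep : iIndepFun U P')
    (hUlaw : ∀ i, Measure.map (U i) P' = volume.restrict (Set.Icc (0 : ℝ) 1))
    (L : Fin n → ℝ) :
    P' {ω | ∀ i, L i ≤ orderStat (fun j => U j ω) i}
      ≤ P {ω | ∀ i, (μ (Set.Iio (orderStat (fun j => X j ω) i))).toReal ≤ 1 - L i.rev} := by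
  have hcoupling := identDistrib_quantile_one_sub hXindep (fun i => (hXmeas i).aemeasurable)
    hXlaw hUindep (fun i => (hUmeas i).aemeasurable) hUlaw
  set E : Set (Fin n → ℝ) := {x | ∀ i, (μ (Iio (orderStat x i))).toReal ≤ 1 - L i.rev}
  have hE : MeasurableSet E := by
    simp only [E, ofPred_forall]
    refine MeasurableSet.iInter fun i => measurableSet_le ?_ measurable_const
    exact (Monotone.measurable fun s t hst => measureReal_mono (Iio_subset_Iio hst)).comp
      (measurable_orderStat i)
  have hU01 : ∀ᵐ ω ∂P', ∀ j, U j ω ∈ Ioo 0 1 := ae_all_iff.2 fun j =>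
    ae_of_ae_map (hUmeas j).aemeasurable ((hUlaw j).symm ▸ ae_mem_Ioo_uniform)
  calc P' {ω | ∀ i, L i ≤ orderStat (fun j => U j ω) i}
      ≤ P' ((fun ω i => quantile μ (1 - U i ω)) ⁻¹' E) := by
        refine measure_mono_ae ?_
        filter_upwards [hU01] with ω hω hL i
        exact (measureReal_Iio_orderStat_quantile_one_sub_le μ hω i).trans
          (sub_le_sub_left (hL i.rev) 1)
    _ = P ((fun ω i => X i ω) ⁻¹' E) := (hcoupling.measure_mem_eq hE).symm

theorem stmt_3
    {Ω : Type*} [MeasurableSpace Ω] (P : Measure Ω) [IsProbabilityMeasure P]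
    {Ω' : Type*} [MeasurableSpace Ω'] (P' : Measure Ω') [IsProbabilityMeasure P']
    (n : ℕ) (X : Fin n → Ω → ℝ) (U : Fin n → Ω' → ℝ)
    (μ : Measure ℝ) [IsProbabilityMeasure μ]
    (hXmeas : ∀ i, Measurable (X i))
    (hXindep : iIndepFun X P)
    (hXlaw : ∀ i, Measure.map (X i) P = μ)
    (hUmeas : ∀ i, Measurable (U i))
    (hUindep : iIndepFun U P')
    (hUlaw : ∀ i, Measure.map (U i) P' = volume.restrict (Set.Icc (0 : ℝ) 1))
    (L : Fin n → ℝ) (hLmono : Monotone L) (hL0 : ∀ i, 0 ≤ L i) (hL1 : ∀ i, L i ≤ 1) :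
    P' {ω | ∀ i, L i ≤ orderStat (fun j => U j ω) i}
      ≤ P {ω | ∀ i, (μ (Set.Iio (orderStat (fun j => X j ω) i))).toReal ≤ 1 - L i.rev} :=
  stmt_3_general P P' n X U μ hXmeas hXindep hXlaw hUmeas hUindep hUlaw L
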